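/- For n ≥ 3, the graph K̄_{n,n}, obtained from the complete bipartite graph K_{n,n} with parts {v_i : i ∈ Z_n} and {v'_i : i ∈ Z_n} by deleting the perfect matching {v_i v'_i : i ∈ Z_n}, has treewidth exactly n − 1. -/

import Mathlib

open SimpleGraph

/-- A tree decomposition of `G`: a tree of bags covering all vertices and
edges, such that the bags containing any fixed vertex form a (connected)
subtree. -/
structure TreeDecomp {V : Type} (G : SimpleGraph V) where
  ι : Type
  tree : SimpleGraph ι
  isTree : tree.IsTree
  bag : ι → Finset V
  mem_bag : ∀ v : V, ∃ i, v ∈ bag i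
  edge_bag : ∀ ⦃u v : V⦄, G.Adj u v → ∃ i, u ∈ bag i ∧ v ∈ bag i
  bag_connected : ∀ v : V, (tree.induce {i | v ∈ bag i}).Connected

/-- `G` has a tree decomposition of width at most `w`. -/
def HasTreewidthLE {V : Type} (G : SimpleGraph V) (w : ℕ) : Prop :=
  ∃ D : TreeDecomp G, ∀ i, (D.bag i).card ≤ w + 1

/-- The treewidth of `G`: the least width of a tree decomposition of `G`. -/
noncomputable def treewidth {V : Type} (G : SimpleGraph V) : ℕ :=
  sInf {w | HasTreewidthLE G w}

/-- `K̄_{n,n}`: the complete bipartite graph `K_{n,n}` on parts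
`{inl i}` and `{inr i}`, minus the perfect matching `{(inl i, inr i)}`. -/
def barK (n : ℕ) : SimpleGraph (Fin n ⊕ Fin n) where
  Adj x y :=
    match x, y with
    | Sum.inl i, Sum.inr j => i ≠ j
    | Sum.inr i, Sum.inl j => i ≠ j
    | _, _ => False
  symm := by constructor; rintro (i | i) (j | j) h <;> simp_all <;> exact fun h' => h h'.symm
  loopless := by constructor; rintro (i | i) h <;> simp_all

/-!
The star decomposition with centre bag `{v_i}` and leaf bags `{v_i : i ≠ k} ∪ {v'_k}` has width
`n - 1`. Conversely, every tree decomposition of a finite graph has a bag containing a closed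
neighbourhood `N[v]`, so the treewidth is at least the minimum degree, here `n - 1`. To find that
bag, root the tree at `r`. The bags containing a vertex `v` form a subtree, with a node `top v`
nearest to `r` that lies on the root path of every bag containing `v`. Take `v` with `top v` as
deep as possible and a neighbour `u`: both tops lie on the root path of a bag containing `u` and
`v`, so `top v` is either `top u` or lies between `top u` and that bag, hence in the subtree of `u`.
-/

namespace SimpleGraph.IsTree

variable {ι : Type*} {T : SimpleGraph ι} (hT : T.IsTree)

noncomputable def path (a b : ι) : T.Walk a b := (hT.existsUnique_path a b).choose

lemma isPath_path (a b : ι) : (hT.path a b).IsPath := (hT.existsUnique_path a b).choose_spec.1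

lemma eq_path {a b : ι} {p : T.Walk a b} (hp : p.IsPath) : p = hT.path a b :=
  (hT.existsUnique_path a b).choose_spec.2 p hp

variable {a b r x y z : ι}

lemma takeUntil_path [DecidableEq ι] (hz : z ∈ (hT.path a b).support) :
    (hT.path a b).takeUntil z hz = hT.path a z :=
  hT.eq_path ((hT.isPath_path a b).takeUntil hz)

lemma dropUntil_path [DecidableEq ι] (hz : z ∈ (hT.path a b).support) :
    (hT.path a b).dropUntil z hz = hT.path z b :=
  hT.eq_path ((hT.isPath_path a b).dropUntil hz)

lemma length_path_lt (hz : z ∈ (hT.path r y).support) (hzy : z ≠ y) :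
    (hT.path r z).length < (hT.path r y).length := by
  classical
  simpa only [hT.takeUntil_path hz] using Walk.length_takeUntil_lt_length hz hzy

lemma mem_support_path_or (hy : y ∈ (hT.path r x).support) (hz : z ∈ (hT.path r x).support) :
    z ∈ (hT.path r y).support ∨ z ∈ (hT.path y x).support := by
  classical
  rwa [← (hT.path r x).take_spec hy, Walk.mem_support_append_iff, hT.takeUntil_path,
    hT.dropUntil_path] at hz

lemma support_path_subset {S : Set ι} (hS : (T.induce S).Connected) (ha : a ∈ S) (hb : b ∈ S) :
    ∀ z ∈ (hT.path a b).support, z ∈ S := by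
  classical
  obtain ⟨w⟩ := hS.preconnected ⟨a, ha⟩ ⟨b, hb⟩
  let w' := w.map (Embedding.induce S).toHom
  have hw' : ∀ z ∈ w'.support, z ∈ S := by
    simp only [w', Walk.support_map, List.mem_map]
    rintro _ ⟨⟨z, hz⟩, -, rfl⟩
    exact hz
  have hpath : hT.path a b = w'.toPath.1 := (hT.eq_path w'.toPath.isPath).symm
  intro z hz
  rw [hpath] at hz
  exact hw' z (w'.support_toPath_subset_support hz)

lemma exists_mem_forall_mem_support_path (r : ι) {S : Set ι} (hS : (T.induce S).Connected) :
    ∃ t ∈ S, ∀ x ∈ S, t ∈ (hT.path r x).support := by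
  obtain ⟨t, ht, hmin⟩ := exists_minimalFor_of_wellFoundedLT (· ∈ S)
    (fun x => (hT.path r x).length) (Set.nonempty_coe_sort.mp hS.nonempty)
  refine ⟨t, ht, fun x hx => ?_⟩
  -- a vertex repeated in `path r t ++ path t x` would be a node of `S` nearer to `r` than `t`
  suffices hpath : ((hT.path r t).append (hT.path t x)).IsPath by
    rw [← hT.eq_path hpath]
    exact (Walk.mem_support_append_iff _ _).mpr (.inl (Walk.end_mem_support _))
  rw [Walk.isPath_def, Walk.support_append]
  refine (hT.isPath_path r t).support_nodup.append (hT.isPath_path t x).support_nodup.tail ?_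
  intro z hzt hzx
  have hne : z ≠ t := by
    rintro rfl
    have := (hT.isPath_path z x).support_nodup
    rw [← Walk.cons_tail_support] at this
    exact (List.nodup_cons.mp this).1 hzx
  have hzS := hT.support_path_subset hS ht hx z (List.mem_of_mem_tail hzx)
  exact (hT.length_path_lt hzt hne).not_ge (hmin hzS (hT.length_path_lt hzt hne).le)

end SimpleGraph.IsTree

lemma SimpleGraph.connected_induce_starGraph_of_mem {ι : Type*} {r : ι} {S : Set ι} (hr : r ∈ S) :
    ((starGraph r).induce S).Connected :=
  Connected.of_isUniversal (v := ⟨r, hr⟩) fun w hw => by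
    simpa [Subtype.ext_iff] using hw

section Treewidth

variable {V : Type} {G : SimpleGraph V}

lemma TreeDecomp.exists_insert_neighborSet_subset_bag [Finite V] [Nonempty V] (D : TreeDecomp G) :
    ∃ v t, insert v (G.neighborSet v) ⊆ (D.bag t : Set V) := by
  obtain ⟨r⟩ := D.isTree.1.nonempty
  choose top htop htop_path using fun v =>
    D.isTree.exists_mem_forall_mem_support_path r (D.bag_connected v)
  obtain ⟨v, hv⟩ := Finite.exists_max fun v => (D.isTree.path r (top v)).length
  refine ⟨v, top v, Set.insert_subset (htop v) fun u huv => ?_⟩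
  obtain ⟨x, hux, hvx⟩ := D.edge_bag (G.adj_symm huv)
  rcases D.isTree.mem_support_path_or (htop_path u x hux) (htop_path v x hvx) with h | h
  · have htop_eq : top v = top u := by
      by_contra hne
      exact (D.isTree.length_path_lt h hne).not_ge (hv u)
    exact htop_eq ▸ htop u
  · exact D.isTree.support_path_subset (D.bag_connected u) (htop u) hux _ h

lemma HasTreewidthLE.minDegree_le [Fintype V] [DecidableRel G.Adj] {w : ℕ}
    (h : HasTreewidthLE G w) : G.minDegree ≤ w := by
  classical
  cases isEmpty_or_nonempty V
  · simp
  obtain ⟨D, hD⟩ := h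
  obtain ⟨v, t, hvt⟩ := D.exists_insert_neighborSet_subset_bag
  have hsub : insert v (G.neighborFinset v) ⊆ D.bag t := by
    rwa [← Finset.coe_subset, Finset.coe_insert, coe_neighborFinset]
  have hcard : G.degree v + 1 ≤ (D.bag t).card := by
    simpa [card_neighborFinset_eq_degree] using Finset.card_le_card hsub
  linarith [G.minDegree_le_degree v, hD t]

lemma treewidth_le {w : ℕ} (h : HasTreewidthLE G w) : treewidth G ≤ w := Nat.sInf_le h

lemma minDegree_le_treewidth [Fintype V] [DecidableRel G.Adj] (h : ∃ w, HasTreewidthLE G w) :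
    G.minDegree ≤ treewidth G :=
  HasTreewidthLE.minDegree_le (Nat.sInf_mem h)

end Treewidth

section barK

open Finset

instance (n : ℕ) : DecidableRel (barK n).Adj
  | .inl i, .inr j => inferInstanceAs (Decidable (i ≠ j))
  | .inr i, .inl j => inferInstanceAs (Decidable (i ≠ j))
  | .inl _, .inl _ => .isFalse id
  | .inr _, .inr _ => .isFalse id

variable {n : ℕ}

@[simp] lemma barK_adj_inl_inr {i j : Fin n} : (barK n).Adj (.inl i) (.inr j) ↔ i ≠ j := .rfl
@[simp] lemma barK_adj_inr_inl {i j : Fin n} : (barK n).Adj (.inr i) (.inl j) ↔ i ≠ j := .rfl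
@[simp] lemma barK_not_adj_inl_inl {i j : Fin n} : ¬(barK n).Adj (.inl i) (.inl j) := id
@[simp] lemma barK_not_adj_inr_inr {i j : Fin n} : ¬(barK n).Adj (.inr i) (.inr j) := id

lemma barK_isRegularOfDegree (n : ℕ) : (barK n).IsRegularOfDegree (n - 1) := by
  rintro (i | i) <;> rw [← card_neighborFinset_eq_degree]
  · rw [show (barK n).neighborFinset (.inl i) = (∅ : Finset (Fin n)).disjSum (univ.erase i) by
      ext (j | j) <;> simp [ne_comm]]
    simp
  · rw [show (barK n).neighborFinset (.inr i) = (univ.erase i).disjSum (∅ : Finset (Fin n)) by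
      ext (j | j) <;> simp [ne_comm]]
    simp

lemma barK_minDegree (n : ℕ) : (barK n).minDegree = n - 1 := by
  rcases n with _ | n
  · simp
  · exact (barK_isRegularOfDegree _).minDegree_eq

def barKStarBag (n : ℕ) : Option (Fin n) → Finset (Fin n ⊕ Fin n)
  | none => univ.disjSum ∅
  | some k => (univ.erase k).disjSum {k}

def barKStarDecomp (n : ℕ) : TreeDecomp (barK n) where
  ι := Option (Fin n)
  tree := starGraph none
  isTree := isTree_starGraph none
  bag := barKStarBag n
  mem_bag
    | .inl i => ⟨none, by simp [barKStarBag]⟩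
    | .inr i => ⟨some i, by simp [barKStarBag]⟩
  edge_bag
    | .inl _, .inl _, h | .inr _, .inr _, h => h.elim
    | .inl _, .inr j, h => ⟨some j, by simpa [barKStarBag] using h⟩
    | .inr i, .inl _, h => ⟨some i, by simpa [barKStarBag, eq_comm] using h⟩
  bag_connected := by
    rintro (i | i)
    · exact connected_induce_starGraph_of_mem (by simp [barKStarBag])
    · have : {x | .inr i ∈ barKStarBag n x} = {some i} := by
        ext (_ | k) <;> simp [barKStarBag, eq_comm]
      rw [this]
      exact Connected.of_subsingleton

lemma barK_hasTreewidthLE (n : ℕ) : HasTreewidthLE (barK n) (n - 1) :=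
  ⟨barKStarDecomp n, fun x => by cases x <;> simp [barKStarDecomp, barKStarBag, le_tsub_add]⟩

end barK

theorem treewidth_barK_general (n : ℕ) : treewidth (barK n) = n - 1 := by
  refine le_antisymm (treewidth_le (barK_hasTreewidthLE n)) ?_
  calc n - 1 = (barK n).minDegree := (barK_minDegree n).symm
    _ ≤ treewidth (barK n) := minDegree_le_treewidth ⟨_, barK_hasTreewidthLE n⟩

/-- for `n ≥ 3`, `treewidth K̄_{n,n} = n - 1`. -/
theorem treewidth_barK (n : ℕ) (hn : 3 ≤ n) : treewidth (barK n) = n - 1 :=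
  treewidth_barK_general n
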